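/- Let L : ℝ^n × ℝ^n → ℝ be differentiable at (q,v), let Δ ⊆ ℝ^n be a linear subspace, and let p, q̇, ṗ ∈ ℝ^n. Then the following are equivalent: (i) [Lagrange-Dirac condition] p = ∂L/∂v(q,v), q̇ ∈ Δ, and for all (δq,δp) with δq ∈ Δ one has (−∂L/∂q(q,v))·δq + v·δp = q̇·δp − ṗ·δq; (ii) [implicit Lagrange-d'Alembert equations] p = ∂L/∂v(q,v), q̇ = v, v ∈ Δ, and (ṗ − ∂L/∂q(q,v))·u = 0 for all u ∈ Δ. -/

import Mathlib

open scoped BigOperators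

/-- The dot product on `ℝ^k`. -/
def dot {k : ℕ} (x y : Fin k → ℝ) : ℝ := ∑ i, x i * y i

open Matrix

theorem dot_eq_dotProduct {k : ℕ} (x y : Fin k → ℝ) : dot x y = x ⬝ᵥ y := rfl

/-- Testing with `δq = 0` recovers `q̇ = v`; testing with `δp = 0` gives the
d'Alembert condition on `Δ`. -/
theorem forall_dotProduct_dirac_iff {ι R : Type*} [Fintype ι] [CommRing R]
    (Δ : Submodule R (ι → R)) (a v qd pd : ι → R) :
    (∀ δq δp : ι → R, δq ∈ Δ → -a ⬝ᵥ δq + v ⬝ᵥ δp = qd ⬝ᵥ δp - pd ⬝ᵥ δq) ↔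
      qd = v ∧ ∀ u ∈ Δ, (pd - a) ⬝ᵥ u = 0 := by
  constructor
  · intro h
    have hqd : qd = v := dotProduct_eq _ _ fun δp ↦ by
      simpa using (h 0 δp Δ.zero_mem).symm
    refine ⟨hqd, fun u hu ↦ ?_⟩
    have := h u 0 hu
    simp only [neg_dotProduct, dotProduct_zero, add_zero, zero_sub, neg_inj] at this
    rw [sub_dotProduct, this, sub_self]
  · rintro ⟨rfl, h⟩ δq δp hδq
    have := h δq hδq
    rw [sub_dotProduct, sub_eq_zero] at this
    rw [neg_dotProduct, this]
    ring

theorem lagrange_dirac_iff_lagrange_dAlembert_general {n : ℕ}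
    (Δ : Submodule ℝ (Fin n → ℝ))
    (v p qd pd : Fin n → ℝ)
    (Lq Lv : Fin n → ℝ) :
    (p = Lv ∧ qd ∈ Δ ∧
      ∀ δq δp : Fin n → ℝ, δq ∈ Δ →
        dot (-Lq) δq + dot v δp = dot qd δp - dot pd δq)
    ↔
    (p = Lv ∧ qd = v ∧ v ∈ Δ ∧ ∀ u ∈ Δ, dot (pd - Lq) u = 0) := by
  simp only [dot_eq_dotProduct, forall_dotProduct_dirac_iff]
  constructor
  · rintro ⟨hp, hqd, rfl, h⟩
    exact ⟨hp, rfl, hqd, h⟩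
  · rintro ⟨hp, rfl, hv, h⟩
    exact ⟨hp, hv, rfl, h⟩

/-- equivalence between the Lagrange-Dirac condition
`((q̇,ṗ), d_D L(q,v)) ∈ D_Δ(q,p)` in local coordinates and the implicit
Lagrange-d'Alembert equations.  Here `Lq = ∂L/∂q(q,v)` and `Lv = ∂L/∂v(q,v)`
are the vectors representing the partial Fréchet derivatives of `L` at `(q,v)`. -/
theorem lagrange_dirac_iff_lagrange_dAlembert {n : ℕ}
    (L : (Fin n → ℝ) × (Fin n → ℝ) → ℝ)
    (Δ : Submodule ℝ (Fin n → ℝ))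
    (q v p qd pd : Fin n → ℝ)
    (Lq Lv : Fin n → ℝ)
    (hL : ∃ f : ((Fin n → ℝ) × (Fin n → ℝ)) →L[ℝ] ℝ,
      HasFDerivAt L f (q, v) ∧
      ∀ ab : (Fin n → ℝ) × (Fin n → ℝ), f ab = dot Lq ab.1 + dot Lv ab.2) :
    (p = Lv ∧ qd ∈ Δ ∧
      ∀ δq δp : Fin n → ℝ, δq ∈ Δ →
        dot (-Lq) δq + dot v δp = dot qd δp - dot pd δq)
    ↔
    (p = Lv ∧ qd = v ∧ v ∈ Δ ∧ ∀ u ∈ Δ, dot (pd - Lq) u = 0) :=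
  lagrange_dirac_iff_lagrange_dAlembert_general Δ v p qd pd Lq Lv
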